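/- arXiv:1301.5118 — 5 statements merged into one kernel-verified Lean document; each statement's English description precedes it below -/
import Mathlib

section
/- Let A_0 = {n ∈ ℕ⁺ : t_n = 1 and min(supp(n)) is even} and A_1 = {n ∈ ℕ⁺ : t_n = 1 and min(supp(n)) is odd}. Then both A_0 and A_1 are finite FS-big, i.e., k-summable for every positive integer k. -/
/-- The Thue-Morse word: `TM n` is the sum modulo 2 of the binary digits of `n`. -/
def TM (n : ℕ) : ℕ := (Nat.digits 2 n).sum % 2

/-- A sequence `x` satisfies uniqueness of finite sums on the index set `I`. -/
def UFSOn (x : ℕ → ℕ) (I : Finset ℕ) : Prop :=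
  ∀ F H : Finset ℕ, F ⊆ I → H ⊆ I → F.Nonempty → H.Nonempty →
    ∑ t ∈ F, x t = ∑ t ∈ H, x t → F = H

/-- `A` is `k`-summable. -/
def KSummable (A : Set ℕ) (k : ℕ) : Prop :=
  ∃ x : ℕ → ℕ, (∀ t ∈ Finset.Icc 1 k, 0 < x t) ∧ UFSOn x (Finset.Icc 1 k) ∧
    ∀ F ⊆ Finset.Icc 1 k, F.Nonempty → ∑ t ∈ F, x t ∈ A

/-- The minimum of the binary support of `n` (for `n > 0`), i.e. the 2-adic
valuation of `n`. -/
def minSupp (n : ℕ) : ℕ := n.factorization 2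

namespace TMAux

/-- binary digit sum -/
def s2 (n : ℕ) : ℕ := (Nat.digits 2 n).sum

lemma s2_bit (a c : ℕ) (hc : c < 2) : s2 (2 * a + c) = s2 a + c := by
  rcases Nat.eq_zero_or_pos (2 * a + c) with h | h
  · have ha : a = 0 := by omega
    have hc0 : c = 0 := by omega
    simp [ha, hc0, s2]
  · have h1 : (2 * a + c) % 2 = c := by omega
    have h2 : (2 * a + c) / 2 = a := by omega
    rw [s2, Nat.digits_def' (by norm_num : (1:ℕ) < 2) h, List.sum_cons, h1, h2]
    rw [show (Nat.digits 2 a).sum = s2 a from rfl]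
    omega

lemma s2_add_pow_mul : ∀ (E : ℕ) (y z : ℕ), y < 2 ^ E →
    s2 (y + 2 ^ E * z) = s2 y + s2 z := by
  intro E
  induction E with
  | zero =>
    intro y z hy
    have : y = 0 := by omega
    simp [this, s2]
  | succ E ih =>
    intro y z hy
    have hp : (2:ℕ) ^ (E + 1) * z = 2 * (2 ^ E * z) := by ring
    have hy' : s2 y = s2 (y / 2) + y % 2 := by
      conv_lhs => rw [← Nat.div_add_mod y 2]
      exact s2_bit _ _ (by omega)
    have hpe : (2:ℕ) ^ (E + 1) = 2 * 2 ^ E := by ring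
    have key : y + 2 ^ (E + 1) * z = 2 * (y / 2 + 2 ^ E * z) + y % 2 := by
      rw [hp]; omega
    rw [key, s2_bit _ _ (by omega), ih (y / 2) z (by omega)]
    omega

lemma s2_compl : ∀ (N : ℕ) (r : ℕ), r < 2 ^ N → s2 (2 ^ N - 1 - r) + s2 r = N := by
  intro N
  induction N with
  | zero =>
    intro r hr
    have : r = 0 := by omega
    simp [this, s2]
  | succ N ih =>
    intro r hr
    have hpe : (2:ℕ) ^ (N + 1) = 2 * 2 ^ N := by ring
    have h1 : (1:ℕ) ≤ 2 ^ N := Nat.one_le_two_pow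
    have key : 2 ^ (N + 1) - 1 - r = 2 * (2 ^ N - 1 - r / 2) + (1 - r % 2) := by
      omega
    have hr2 : r = 2 * (r / 2) + r % 2 := by omega
    have e1 : s2 (2 ^ (N + 1) - 1 - r) = s2 (2 ^ N - 1 - r / 2) + (1 - r % 2) := by
      rw [key]; exact s2_bit _ _ (by omega)
    have e2 : s2 r = s2 (r / 2) + r % 2 := by
      conv_lhs => rw [hr2]
      exact s2_bit _ _ (by omega)
    have e3 := ih (r / 2) (by omega)
    omega

lemma s2_mul_pred_pow (N m : ℕ) (h1 : 0 < m) (h2 : m < 2 ^ N) :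
    s2 (m * (2 ^ N - 1)) = N := by
  have hP : (1:ℕ) ≤ 2 ^ N := Nat.one_le_two_pow
  have key : m * (2 ^ N - 1) = (2 ^ N - 1 - (m - 1)) + 2 ^ N * (m - 1) := by
    obtain ⟨s, rfl⟩ : ∃ s, m = s + 1 := ⟨m - 1, by omega⟩
    have hs : s + 1 ≤ 2 ^ N := by omega
    have e1 : (s + 1) * (2 ^ N - 1) + (s + 1) = (s + 1) * 2 ^ N := by
      rw [← Nat.mul_succ, Nat.succ_eq_add_one, Nat.sub_add_cancel hP]
    have e2 : (s + 1) * 2 ^ N = 2 ^ N * s + 2 ^ N := by ring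
    simp only [Nat.add_sub_cancel]
    omega
  rw [key, s2_add_pow_mul N _ _ (by omega)]
  have := s2_compl N (m - 1) (by omega)
  omega

lemma s2_three : s2 3 = 2 := by
  have h1 := s2_bit 0 1 (by omega)
  have h3 := s2_bit 1 1 (by omega)
  norm_num at h1 h3
  have h0 : s2 0 = 0 := by simp [s2]
  omega

lemma sum_range_four_lt (a : ℕ) : ∑ t ∈ Finset.range a, 4 ^ t < 4 ^ a := by
  induction a with
  | zero => simp
  | succ a ih =>
    rw [Finset.sum_range_succ]
    have : (4:ℕ) ^ (a + 1) = 4 ^ a * 4 := by ring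
    omega

lemma sum_range_three_four (a : ℕ) : ∑ t ∈ Finset.range a, 3 * 4 ^ t = 4 ^ a - 1 := by
  induction a with
  | zero => simp
  | succ a ih =>
    rw [Finset.sum_range_succ, ih]
    have h1 : (1:ℕ) ≤ 4 ^ a := Nat.one_le_pow _ _ (by norm_num)
    have : (4:ℕ) ^ (a + 1) = 4 ^ a * 4 := by ring
    omega

lemma s2_sum_blocks (F : Finset ℕ) : s2 (∑ t ∈ F, 3 * 4 ^ t) = 2 * F.card := by
  induction F using Finset.induction_on_max with
  | empty => simp [s2]
  | insert a F ha ih =>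
    have haF : a ∉ F := fun h => lt_irrefl a (ha a h)
    rw [Finset.sum_insert haF]
    have hsub : F ⊆ Finset.range a := fun t ht => Finset.mem_range.mpr (ha t ht)
    have hb : ∑ t ∈ F, 3 * 4 ^ t < 2 ^ (2 * a) := by
      have h1 : ∑ t ∈ F, 3 * 4 ^ t ≤ ∑ t ∈ Finset.range a, 3 * 4 ^ t :=
        Finset.sum_le_sum_of_subset hsub
      rw [sum_range_three_four] at h1
      have h2 : (4:ℕ) ^ a = 2 ^ (2 * a) := by
        rw [show (4:ℕ) = 2 ^ 2 by norm_num, ← pow_mul]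
      have h3 : (1:ℕ) ≤ 4 ^ a := Nat.one_le_pow _ _ (by norm_num)
      omega
    have key : 3 * 4 ^ a + ∑ t ∈ F, 3 * 4 ^ t = (∑ t ∈ F, 3 * 4 ^ t) + 2 ^ (2 * a) * 3 := by
      have : (4:ℕ) ^ a = 2 ^ (2 * a) := by
        rw [show (4:ℕ) = 2 ^ 2 by norm_num, ← pow_mul]
      omega
    rw [key, s2_add_pow_mul _ _ _ hb, ih, s2_three,
      Finset.card_insert_of_notMem haF]
    ring

lemma sum_four_pow_inj : ∀ (F : Finset ℕ), ∀ (H : Finset ℕ),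
    ∑ t ∈ F, 4 ^ t = ∑ t ∈ H, 4 ^ t → F = H := by
  intro F
  induction F using Finset.induction_on_max with
  | empty =>
    intro H h
    by_contra hne
    obtain ⟨a, ha⟩ := Finset.nonempty_iff_ne_empty.mpr (Ne.symm hne)
    have h4 : (4:ℕ) ^ a ≤ ∑ t ∈ H, 4 ^ t :=
      Finset.single_le_sum (fun i _ => Nat.zero_le _) ha
    have hpos : 0 < (4:ℕ) ^ a := pow_pos (by norm_num) _
    simp only [Finset.sum_empty] at h
    omega
  | insert a F haF ih =>
    intro H h
    have haF' : a ∉ F := fun h' => lt_irrefl a (haF a h')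
    rw [Finset.sum_insert haF'] at h
    have hFsub : F ⊆ Finset.range a := fun t ht => Finset.mem_range.mpr (haF t ht)
    have hFb : ∑ t ∈ F, 4 ^ t < 4 ^ a := by
      have h1 : ∑ t ∈ F, 4 ^ t ≤ ∑ t ∈ Finset.range a, 4 ^ t :=
        Finset.sum_le_sum_of_subset hFsub
      have := sum_range_four_lt a
      omega
    -- total sum is < 2 * 4^a ≤ 4^(a+1)
    have hS : ∑ t ∈ H, 4 ^ t < 4 ^ (a + 1) := by
      have : (4:ℕ) ^ (a + 1) = 4 ^ a * 4 := by ring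
      omega
    -- every element of H is ≤ a
    have hHle : ∀ h' ∈ H, h' ≤ a := by
      intro h' hh
      by_contra hgt
      have h4 : (4:ℕ) ^ h' ≤ ∑ t ∈ H, 4 ^ t :=
        Finset.single_le_sum (fun i _ => Nat.zero_le _) hh
      have : (4:ℕ) ^ (a + 1) ≤ 4 ^ h' := Nat.pow_le_pow_right (by norm_num) (by omega)
      omega
    -- a ∈ H
    have haH : a ∈ H := by
      by_contra haH
      have hsub : H ⊆ Finset.range a := by
        intro h' hh
        have := hHle h' hh
        rcases Nat.lt_or_ge h' a with h1 | h1
        · exact Finset.mem_range.mpr h1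
        · exact absurd (by omega : h' = a) (fun e => haH (e ▸ hh))
      have h1 : ∑ t ∈ H, 4 ^ t ≤ ∑ t ∈ Finset.range a, 4 ^ t :=
        Finset.sum_le_sum_of_subset hsub
      have := sum_range_four_lt a
      have hpos : 0 < (4:ℕ) ^ a := pow_pos (by norm_num) _
      omega
    have hHsplit : ∑ t ∈ H, 4 ^ t = 4 ^ a + ∑ t ∈ H.erase a, 4 ^ t :=
      (Finset.add_sum_erase H _ haH).symm
    have heq : ∑ t ∈ F, 4 ^ t = ∑ t ∈ H.erase a, 4 ^ t := by omega
    have := ih (H.erase a) heq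
    rw [this, Finset.insert_erase haH]

/-- the key structural lemma about subset sums of our sequence -/
lemma key (k : ℕ) (F : Finset ℕ) (hF : F ⊆ Finset.Icc 1 k) (hne : F.Nonempty) :
    ∃ j u : ℕ, j ≤ k ∧ u % 2 = 1 ∧
      (∑ t ∈ F, (3 * 4 ^ t + 4 ^ (k + 2) * (2 ^ (2 * k + 1) - 1))) = 2 ^ (2 * j) * u ∧
      s2 (∑ t ∈ F, (3 * 4 ^ t + 4 ^ (k + 2) * (2 ^ (2 * k + 1) - 1)))
        = 2 * F.card + (2 * k + 1) := by
  set b : ℕ := 2 ^ (2 * k + 1) - 1 with hb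
  set L : ℕ := ∑ t ∈ F, 3 * 4 ^ t with hL
  set m : ℕ := F.card with hm
  have hsplit : (∑ t ∈ F, (3 * 4 ^ t + 4 ^ (k + 2) * b)) = L + 2 ^ (2 * (k + 2)) * (m * b) := by
    rw [Finset.sum_add_distrib, Finset.sum_const, smul_eq_mul, ← hL, ← hm]
    rw [show (4:ℕ) ^ (k + 2) = 2 ^ (2 * (k + 2)) by
      rw [show (4:ℕ) = 2 ^ 2 by norm_num, ← pow_mul]]
    ring
  -- bound on L
  have hLlt : L < 2 ^ (2 * (k + 2)) := by
    have hsub : F ⊆ Finset.range (k + 1) := by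
      intro t ht
      have := hF ht
      rw [Finset.mem_Icc] at this
      exact Finset.mem_range.mpr (by omega)
    have h1 : L ≤ ∑ t ∈ Finset.range (k + 1), 3 * 4 ^ t := Finset.sum_le_sum_of_subset hsub
    rw [sum_range_three_four] at h1
    have h2 : (4:ℕ) ^ (k + 1) ≤ 4 ^ (k + 2) := Nat.pow_le_pow_right (by norm_num) (by omega)
    have h3 : (4:ℕ) ^ (k + 2) = 2 ^ (2 * (k + 2)) := by
      rw [show (4:ℕ) = 2 ^ 2 by norm_num, ← pow_mul]
    have h4 : 0 < (4:ℕ) ^ k := pow_pos (by norm_num) _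
    omega
  -- card bounds
  have hm1 : 0 < m := Finset.card_pos.mpr hne
  have hmk : m ≤ k := by
    have := Finset.card_le_card hF
    simpa [Nat.card_Icc] using this
  have hmlt : m < 2 ^ (2 * k + 1) := by
    have h1 : k < 2 ^ k := Nat.lt_two_pow_self
    have h2 : (2:ℕ) ^ k ≤ 2 ^ (2 * k + 1) := Nat.pow_le_pow_right (by norm_num) (by omega)
    omega
  -- digit sum
  have hs2 : s2 (L + 2 ^ (2 * (k + 2)) * (m * b)) = 2 * m + (2 * k + 1) := by
    rw [s2_add_pow_mul _ _ _ hLlt, hL, s2_sum_blocks, ← hm, hb,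
      s2_mul_pred_pow (2 * k + 1) m hm1 hmlt]
  -- decomposition as power of two times odd
  set j : ℕ := F.min' hne with hj
  have hjF : j ∈ F := Finset.min'_mem F hne
  have hjk : j ≤ k := by
    have := hF hjF
    rw [Finset.mem_Icc] at this
    omega
  have hLsplit : L = 3 * 4 ^ j + ∑ t ∈ F.erase j, 3 * 4 ^ t :=
    (Finset.add_sum_erase F _ hjF).symm
  have hdvd : 4 ^ (j + 1) ∣ ∑ t ∈ F.erase j, 3 * 4 ^ t := by
    apply Finset.dvd_sum
    intro t ht
    have ht1 : t ∈ F := Finset.mem_of_mem_erase ht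
    have ht2 : t ≠ j := Finset.ne_of_mem_erase ht
    have ht3 : j ≤ t := Finset.min'_le F t ht1
    exact Dvd.dvd.mul_left (pow_dvd_pow 4 (by omega)) 3
  obtain ⟨c, hc⟩ := hdvd
  refine ⟨j, 3 + 4 * c + 4 ^ (k + 2 - j) * (m * b), hjk, ?_, ?_, ?_⟩
  · have h4 : (4:ℕ) ^ (k + 2 - j) = 4 * 4 ^ (k + 1 - j) := by
      rw [show k + 2 - j = (k + 1 - j) + 1 by omega]
      ring
    rw [h4, mul_assoc]
    omega
  · have h4j : (2:ℕ) ^ (2 * j) = 4 ^ j := by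
      rw [show (4:ℕ) = 2 ^ 2 by norm_num, ← pow_mul]
    have h4k : (2:ℕ) ^ (2 * (k + 2)) = 4 ^ j * 4 ^ (k + 2 - j) := by
      rw [show (4:ℕ) = 2 ^ 2 by norm_num, ← pow_mul, ← pow_mul, ← pow_add]
      congr 1
      omega
    rw [hsplit, hLsplit, hc, h4k, h4j, pow_succ]
    ring
  · rw [hsplit]; exact hs2



lemma sum_split (k : ℕ) (F : Finset ℕ) :
    (∑ t ∈ F, (3 * 4 ^ t + 4 ^ (k + 2) * (2 ^ (2 * k + 1) - 1)))
      = (∑ t ∈ F, 3 * 4 ^ t) + 2 ^ (2 * (k + 2)) * (F.card * (2 ^ (2 * k + 1) - 1)) := by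
  rw [Finset.sum_add_distrib, Finset.sum_const, smul_eq_mul]
  rw [show (4:ℕ) ^ (k + 2) = 2 ^ (2 * (k + 2)) by
    rw [show (4:ℕ) = 2 ^ 2 by norm_num, ← pow_mul]]
  ring

lemma L_lt (k : ℕ) (F : Finset ℕ) (hF : F ⊆ Finset.Icc 1 k) :
    (∑ t ∈ F, 3 * 4 ^ t) < 2 ^ (2 * (k + 2)) := by
  have hsub : F ⊆ Finset.range (k + 1) := by
    intro t ht
    have := hF ht
    rw [Finset.mem_Icc] at this
    exact Finset.mem_range.mpr (by omega)
  have h1 : (∑ t ∈ F, 3 * 4 ^ t) ≤ ∑ t ∈ Finset.range (k + 1), 3 * 4 ^ t :=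
    Finset.sum_le_sum_of_subset hsub
  rw [sum_range_three_four] at h1
  have h3 : (4:ℕ) ^ (k + 2) = 2 ^ (2 * (k + 2)) := by
    rw [show (4:ℕ) = 2 ^ 2 by norm_num, ← pow_mul]
  have h2 : (4:ℕ) ^ (k + 1) ≤ 4 ^ (k + 2) := Nat.pow_le_pow_right (by norm_num) (by omega)
  have h4 : 0 < (4:ℕ) ^ k := pow_pos (by norm_num) _
  omega

lemma sums_inj (k : ℕ) (F H : Finset ℕ) (hF : F ⊆ Finset.Icc 1 k) (hH : H ⊆ Finset.Icc 1 k)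
    (hsum : (∑ t ∈ F, (3 * 4 ^ t + 4 ^ (k + 2) * (2 ^ (2 * k + 1) - 1)))
      = ∑ t ∈ H, (3 * 4 ^ t + 4 ^ (k + 2) * (2 ^ (2 * k + 1) - 1))) : F = H := by
  rw [sum_split, sum_split] at hsum
  have hmod := congrArg (fun z => z % 2 ^ (2 * (k + 2))) hsum
  simp only [Nat.add_mul_mod_self_left] at hmod
  rw [Nat.mod_eq_of_lt (L_lt k F hF), Nat.mod_eq_of_lt (L_lt k H hH)] at hmod
  have h3 : (3:ℕ) * ∑ t ∈ F, 4 ^ t = 3 * ∑ t ∈ H, 4 ^ t := by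
    rw [Finset.mul_sum, Finset.mul_sum]
    exact hmod
  exact sum_four_pow_inj F H (Nat.eq_of_mul_eq_mul_left (by norm_num) h3)

end TMAux

open TMAux in
/-- Both cells of the partition of `𝕋|_1` by the parity of the minimum of the
binary support are finite FS-big, i.e., `k`-summable for every positive `k`. -/
theorem tm_one_partition_finite_FS_big (k : ℕ) (hk : 0 < k) :
    KSummable {n : ℕ | 0 < n ∧ TM n = 1 ∧ Even (minSupp n)} k ∧
    KSummable {n : ℕ | 0 < n ∧ TM n = 1 ∧ Odd (minSupp n)} k := by
  set X : ℕ → ℕ := fun t => 3 * 4 ^ t + 4 ^ (k + 2) * (2 ^ (2 * k + 1) - 1) with hX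
  constructor
  · refine ⟨X, ?_, ?_, ?_⟩
    · intro t _
      have : 0 < 3 * 4 ^ t := by positivity
      simp only [hX]
      omega
    · intro F H hF hH _ _ hsum
      exact sums_inj k F H hF hH hsum
    · intro F hF hne
      obtain ⟨j, u, hjk, hu, hSeq, hs2S⟩ := key k F hF hne
      have hu0 : u ≠ 0 := by omega
      refine ⟨?_, ?_, ?_⟩
      · rw [hSeq]
        exact Nat.mul_pos (pow_pos (by norm_num) _) (by omega)
      · have hTM : TM (∑ t ∈ F, X t) = s2 (∑ t ∈ F, X t) % 2 := rfl
        rw [hTM, hs2S]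
        omega
      · have hmin : minSupp (∑ t ∈ F, X t) = 2 * j := by
          rw [hSeq, minSupp,
            Nat.factorization_mul (pow_ne_zero _ two_ne_zero) hu0, Finsupp.add_apply,
            Nat.Prime.factorization_pow Nat.prime_two, Finsupp.single_eq_same,
            Nat.factorization_eq_zero_of_not_dvd (by omega : ¬ (2:ℕ) ∣ u)]
          omega
        rw [hmin]
        exact ⟨j, by ring⟩
  · refine ⟨fun t => 2 * X t, ?_, ?_, ?_⟩
    · intro t _
      have : 0 < 3 * 4 ^ t := by positivity
      simp only [hX]
      omega
    · intro F H hF hH _ _ hsum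
      rw [← Finset.mul_sum, ← Finset.mul_sum] at hsum
      exact sums_inj k F H hF hH (Nat.eq_of_mul_eq_mul_left (by norm_num) hsum)
    · intro F hF hne
      obtain ⟨j, u, hjk, hu, hSeq, hs2S⟩ := key k F hF hne
      have hu0 : u ≠ 0 := by omega
      have hsum2 : (∑ t ∈ F, 2 * X t) = 2 * ∑ t ∈ F, X t := by
        rw [← Finset.mul_sum]
      have hs2' : s2 (∑ t ∈ F, 2 * X t) = s2 (∑ t ∈ F, X t) := by
        rw [hsum2]
        have := s2_bit (∑ t ∈ F, X t) 0 (by omega)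
        simpa using this
      refine ⟨?_, ?_, ?_⟩
      · rw [hsum2, hSeq]
        have : 0 < 2 ^ (2 * j) * u := Nat.mul_pos (pow_pos (by norm_num) _) (by omega)
        omega
      · have hTM : TM (∑ t ∈ F, 2 * X t) = s2 (∑ t ∈ F, 2 * X t) % 2 := rfl
        rw [hTM, hs2', hs2S]
        omega
      · have hdecomp : (∑ t ∈ F, 2 * X t) = 2 ^ (2 * j + 1) * u := by
          rw [hsum2, hSeq, pow_succ]
          ring
        have hmin : minSupp (∑ t ∈ F, 2 * X t) = 2 * j + 1 := by
          rw [hdecomp, minSupp,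
            Nat.factorization_mul (pow_ne_zero _ two_ne_zero) hu0, Finsupp.add_apply,
            Nat.Prime.factorization_pow Nat.prime_two, Finsupp.single_eq_same,
            Nat.factorization_eq_zero_of_not_dvd (by omega : ¬ (2:ℕ) ∣ u)]
        rw [hmin]
        exact ⟨j, by ring⟩
end

section
/- The collection of all infinite FS-big subsets of the positive integers is not partition regular: there exist a set A ⊆ ℕ⁺ which is infinite FS-big and a partition A = A_0 ∪ A_1 into two disjoint sets such that neither A_0 nor A_1 is 2^∞-summable (and in particular neither is infinite FS-big). -/
/-- An infinite sequence satisfies uniqueness of finite sums. -/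
def UFSInf (x : ℕ → ℕ) : Prop :=
  ∀ F H : Finset ℕ, F.Nonempty → H.Nonempty →
    ∑ t ∈ F, x t = ∑ t ∈ H, x t → F = H

/-- `A` is `k^∞`-summable. -/
def KInfSummable (A : Set ℕ) (k : ℕ) : Prop :=
  ∃ x : ℕ → ℕ, (∀ t, 0 < x t) ∧ UFSInf x ∧
    ∀ F : Finset ℕ, F.Nonempty → F.card ≤ k → ∑ t ∈ F, x t ∈ A

/-- `A` is infinite FS-big if it is `k^∞`-summable for every positive `k`. -/
def InfiniteFSBig (A : Set ℕ) : Prop := ∀ k : ℕ, 0 < k → KInfSummable A k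

namespace FSAux

/-- value of a finite set of base-3 digit positions -/
def nu (F : Finset ℕ) : ℕ := ∑ j ∈ F, 3 ^ j

/-- shift digit positions down by one, dropping position 0 -/
def shift (F : Finset ℕ) : Finset ℕ := (F.erase 0).image (· - 1)

lemma mem_shift (F : Finset ℕ) (j : ℕ) : j ∈ shift F ↔ j + 1 ∈ F := by
  simp only [shift, Finset.mem_image, Finset.mem_erase]
  constructor
  · rintro ⟨i, ⟨hi0, hiF⟩, rfl⟩
    have hi : i - 1 + 1 = i := by omega
    rwa [hi]
  · intro h
    exact ⟨j + 1, ⟨by omega, h⟩, by omega⟩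

lemma nu_shift (F : Finset ℕ) : 3 * nu (shift F) = nu (F.erase 0) := by
  unfold nu shift
  rw [Finset.mul_sum, Finset.sum_image]
  · apply Finset.sum_congr rfl
    intro i hi
    have hi0 : i ≠ 0 := (Finset.mem_erase.mp hi).1
    rw [show 3 * 3 ^ (i - 1) = 3 ^ (i - 1 + 1) from (pow_succ 3 (i - 1)).symm ▸ (mul_comm _ _)]
    congr 1
    omega
  · intro a ha b hb hab
    have ha0 : a ≠ 0 := (Finset.mem_erase.mp ha).1
    have hb0 : b ≠ 0 := (Finset.mem_erase.mp hb).1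
    dsimp only at hab
    omega

lemma nu_decomp (F : Finset ℕ) :
    nu F = (if 0 ∈ F then 1 else 0) + 3 * nu (shift F) := by
  rw [nu_shift]
  by_cases h : 0 ∈ F
  · rw [if_pos h]
    have := Finset.add_sum_erase F (fun j => 3 ^ j) h
    simpa [nu] using this.symm
  · rw [if_neg h, Finset.erase_eq_of_notMem h]
    simp

lemma nu_eq_zero {F : Finset ℕ} (h : nu F = 0) : F = ∅ := by
  by_contra hne
  obtain ⟨j, hj⟩ := Finset.nonempty_iff_ne_empty.mpr hne
  have h1 : 3 ^ j ≤ nu F := Finset.single_le_sum (fun i _ => Nat.zero_le _) hj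
  have h2 : 0 < 3 ^ j := Nat.pow_pos (by norm_num)
  omega

lemma key : ∀ n : ℕ, ∀ F G H : Finset ℕ,
    nu F + nu G = n → nu H = n → Disjoint F G ∧ F ∪ G = H := by
  intro n
  induction n using Nat.strong_induction_on with
  | _ n ih =>
    intro F G H hFG hH
    rcases Nat.eq_zero_or_pos n with rfl | hn
    · have hF : F = ∅ := nu_eq_zero (by omega)
      have hG : G = ∅ := nu_eq_zero (by omega)
      have hHe : H = ∅ := nu_eq_zero hH
      subst hF; subst hG; subst hHe
      simp
    · have eF := nu_decomp F
      have eG := nu_decomp G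
      have eH := nu_decomp H
      have haB : (if 0 ∈ F then 1 else 0) ≤ 1 := by split <;> omega
      have hbB : (if 0 ∈ G then 1 else 0) ≤ 1 := by split <;> omega
      have hcB : (if 0 ∈ H then 1 else 0) ≤ 1 := by split <;> omega
      have hab : (if 0 ∈ F then 1 else 0) + (if 0 ∈ G then 1 else 0)
          = (if 0 ∈ H then 1 else 0) := by omega
      have hsums : nu (shift F) + nu (shift G) = nu (shift H) := by omega
      have hlt : nu (shift H) < n := by omega
      obtain ⟨hdis', hun'⟩ := ih _ hlt (shift F) (shift G) (shift H) hsums rfl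
      constructor
      · rw [Finset.disjoint_left]
        intro j hjF hjG
        cases j with
        | zero =>
          rw [if_pos hjF, if_pos hjG] at hab
          omega
        | succ m =>
          have h1 : m ∈ shift F := (mem_shift F m).mpr hjF
          have h2 : m ∈ shift G := (mem_shift G m).mpr hjG
          exact absurd h2 (Finset.disjoint_left.mp hdis' h1)
      · ext j
        rw [Finset.mem_union]
        cases j with
        | zero =>
          by_cases h0F : 0 ∈ F <;> by_cases h0G : 0 ∈ G <;> by_cases h0H : 0 ∈ H <;>
            simp [h0F, h0G, h0H] at hab ⊢
        | succ m =>
          have h3 := Finset.ext_iff.mp hun' m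
          rw [Finset.mem_union, mem_shift, mem_shift, mem_shift] at h3
          exact h3

lemma nu_inj {F G : Finset ℕ} (h : nu F = nu G) : F = G := by
  have h2 := key (nu G) F ∅ G (by simpa [nu] using h) rfl
  simpa using h2.2

/-- the sparseness condition: nonempty and every element at least the cardinality -/
def Good (F : Finset ℕ) : Prop := F.Nonempty ∧ ∀ j ∈ F, F.card ≤ j

/-- the two cells -/
def Acell (p : ℕ) : Set ℕ :=
  { n | ∃ F : Finset ℕ, Good F ∧ Nat.log 2 F.card % 2 = p ∧ n = nu F }

lemma not_summable (p : ℕ) : ¬ KInfSummable (Acell p) 2 := by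
  rintro ⟨x, -, -, hmem⟩
  have h1 : ∀ t, x t ∈ Acell p := by
    intro t
    have := hmem {t} (Finset.singleton_nonempty t) (by simp)
    simpa using this
  choose Ft hgood hpar hval using h1
  have hsum : ∀ s t : ℕ, s ≠ t → ∃ H : Finset ℕ, Good H ∧ Nat.log 2 H.card % 2 = p ∧
      Disjoint (Ft s) (Ft t) ∧ Ft s ∪ Ft t = H := by
    intro s t hst
    have hm := hmem {s, t} ⟨s, by simp⟩ Finset.card_le_two
    rw [Finset.sum_pair hst] at hm
    obtain ⟨H, hHg, hHp, hHv⟩ := hm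
    have hk := key (nu H) (Ft s) (Ft t) H (by rw [← hval s, ← hval t, ← hHv]) rfl
    exact ⟨H, hHg, hHp, hk.1, hk.2⟩
  obtain ⟨j0, hj0⟩ := (hgood 0).1
  have hbound : ∀ t : ℕ, t ≠ 0 → (Ft t).card ≤ j0 := by
    intro t ht
    obtain ⟨H, hHg, -, hdisj, hun⟩ := hsum 0 t (Ne.symm ht)
    have hj0H : j0 ∈ H := hun ▸ Finset.mem_union_left _ hj0
    have h1 : H.card ≤ j0 := hHg.2 j0 hj0H
    have h2 : (Ft t).card ≤ H.card :=
      Finset.card_le_card (hun ▸ Finset.subset_union_right)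
    omega
  have maps : ∀ t ∈ Finset.Icc 1 (j0 + 1), (Ft t).card ∈ Finset.Icc 1 j0 := by
    intro t ht
    rw [Finset.mem_Icc] at ht ⊢
    exact ⟨(hgood t).1.card_pos, hbound t (by omega)⟩
  have hcard : (Finset.Icc 1 j0).card < (Finset.Icc 1 (j0 + 1)).card := by
    rw [Nat.card_Icc, Nat.card_Icc]
    omega
  obtain ⟨s, hs, t, ht, hst, heq⟩ :=
    Finset.exists_ne_map_eq_of_card_lt_of_maps_to hcard maps
  obtain ⟨H, hHg, hHp, hdisj, hun⟩ := hsum s t hst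
  have hHcard : H.card = 2 * (Ft s).card := by
    rw [← hun, Finset.card_union_of_disjoint hdisj, ← heq]
    omega
  have hd : 1 ≤ (Ft s).card := (hgood s).1.card_pos
  have hlog : Nat.log 2 (2 * (Ft s).card) = Nat.log 2 (Ft s).card + 1 := by
    rw [mul_comm]
    exact Nat.log_mul_base one_lt_two (by omega)
  have hp1 := hpar s
  rw [hHcard, hlog] at hHp
  omega

lemma big : InfiniteFSBig (Acell 0 ∪ Acell 1) := by
  intro k hk
  refine ⟨fun t => 3 ^ (k + t), fun t => Nat.pow_pos (by norm_num), ?_, ?_⟩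
  · intro F H hF hH hsumeq
    have hinj : Function.Injective (fun t => k + t) := fun a b h => Nat.add_left_cancel h
    have e1 : ∑ t ∈ F, 3 ^ (k + t) = nu (F.image (k + ·)) := by
      rw [nu, Finset.sum_image (fun a _ b _ h => hinj h)]
    have e2 : ∑ t ∈ H, 3 ^ (k + t) = nu (H.image (k + ·)) := by
      rw [nu, Finset.sum_image (fun a _ b _ h => hinj h)]
    rw [e1, e2] at hsumeq
    have himg := nu_inj hsumeq
    exact Finset.image_injective hinj himg
  · intro F hF hcard
    have hinj : Function.Injective (fun t => k + t) := fun a b h => Nat.add_left_cancel h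
    have e1 : ∑ t ∈ F, 3 ^ (k + t) = nu (F.image (k + ·)) := by
      rw [nu, Finset.sum_image (fun a _ b _ h => hinj h)]
    have hgood : Good (F.image (k + ·)) := by
      constructor
      · exact hF.image _
      · intro j hj
        rw [Finset.card_image_of_injective _ hinj]
        simp only [Finset.mem_image] at hj
        obtain ⟨t, -, rfl⟩ := hj
        omega
    rcases Nat.mod_two_eq_zero_or_one (Nat.log 2 (F.image (k + ·)).card) with h | h
    · exact Or.inl ⟨F.image (k + ·), hgood, h, e1⟩
    · exact Or.inr ⟨F.image (k + ·), hgood, h, e1⟩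

end FSAux

/-- The collection of infinite FS-big sets is not partition regular: there is
an infinite FS-big set of positive integers which splits into two disjoint
cells neither of which is `2^∞`-summable. -/
theorem infinite_FS_big_not_partition_regular :
    ∃ A A0 A1 : Set ℕ, (∀ n ∈ A, 0 < n) ∧ InfiniteFSBig A ∧
      A = A0 ∪ A1 ∧ Disjoint A0 A1 ∧
      ¬ KInfSummable A0 2 ∧ ¬ KInfSummable A1 2 := by
  refine ⟨FSAux.Acell 0 ∪ FSAux.Acell 1, FSAux.Acell 0, FSAux.Acell 1, ?_, FSAux.big, rfl,
    ?_, FSAux.not_summable 0, FSAux.not_summable 1⟩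
  · rintro n (⟨F, hFg, -, rfl⟩ | ⟨F, hFg, -, rfl⟩) <;>
    · obtain ⟨j, hj⟩ := hFg.1
      have h1 : 3 ^ j ≤ FSAux.nu F := Finset.single_le_sum (fun i _ => Nat.zero_le _) hj
      have h2 : 0 < 3 ^ j := Nat.pow_pos (by norm_num)
      omega
  · rw [Set.disjoint_left]
    rintro n ⟨F, -, hp0, rfl⟩ ⟨G, -, hp1, hval⟩
    have := FSAux.nu_inj hval
    subst this
    omega
end

section
/- For every nonnegative integer n, the set {m ∈ ℕ : t_{n+m} = t_n} is an IP-set and the set {m ∈ ℕ : t_{n+m} ≠ t_n} is not an IP-set. In particular, for each n exactly one of the two sets {m : t_{n+m} = 0} and {m : t_{n+m} = 1} (the occurrence sets of the letters 0 and 1 in the n-th shift of the Thue-Morse word) is an IP-set. -/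
/-- `A` is an IP-set: it contains all finite sums of distinct terms of some
infinite sequence of positive integers. -/
def IsIPSet (A : Set ℕ) : Prop :=
  ∃ x : ℕ → ℕ, (∀ t, 0 < x t) ∧ ∀ F : Finset ℕ, F.Nonempty → ∑ t ∈ F, x t ∈ A

/-- Digit sums add when there is no overlap. -/
lemma sum_digits_split {u v L : ℕ} (h : u < 2 ^ L) :
    (Nat.digits 2 (u + 2 ^ L * v)).sum =
      (Nat.digits 2 u).sum + (Nat.digits 2 v).sum := by
  rcases Nat.eq_zero_or_pos v with rfl | hv
  · simp
  rcases Nat.eq_zero_or_pos u with rfl | hu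
  · rw [zero_add, Nat.digits_base_pow_mul one_lt_two hv]
    simp
  have hlen : (Nat.digits 2 u).length ≤ L := by
    have := Nat.digits_len 2 u one_lt_two hu.ne'
    have hlog : Nat.log 2 u < L := Nat.log_lt_of_lt_pow hu.ne' h
    omega
  obtain ⟨k, hk⟩ : ∃ k, L = (Nat.digits 2 u).length + k := ⟨L - (Nat.digits 2 u).length, by omega⟩
  rw [hk, ← Nat.digits_append_zeroes_append_digits one_lt_two hv]
  simp

lemma sum_three_pow_lt {F : Finset ℕ} {M : ℕ} (h : ∀ t ∈ F, t < M) :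
    ∑ t ∈ F, 3 * 4 ^ t < 4 ^ M := by
  calc ∑ t ∈ F, 3 * 4 ^ t ≤ ∑ t ∈ Finset.range M, 3 * 4 ^ t := by
        apply Finset.sum_le_sum_of_subset
        intro t ht
        exact Finset.mem_range.mpr (h t ht)
    _ < 4 ^ M := by
        rw [← Finset.mul_sum]
        have key : ∀ M : ℕ, 3 * ∑ i ∈ Finset.range M, 4 ^ i + 1 = 4 ^ M := by
          intro M
          induction M with
          | zero => simp
          | succ M ih =>
            rw [Finset.sum_range_succ, pow_succ]
            omega
        have := key M
        omega

lemma digitsum_sum_three_pow (F : Finset ℕ) :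
    (Nat.digits 2 (∑ t ∈ F, 3 * 4 ^ t)).sum = 2 * F.card := by
  induction F using Finset.induction_on_max with
  | empty => simp
  | insert a F ha ih =>
    rw [Finset.sum_insert (fun h => absurd (ha a h) (lt_irrefl a))]
    have hlt : ∑ t ∈ F, 3 * 4 ^ t < 2 ^ (2 * a) := by
      have := sum_three_pow_lt (M := a) (F := F) (fun t ht => ha t ht)
      calc ∑ t ∈ F, 3 * 4 ^ t < 4 ^ a := this
        _ = 2 ^ (2 * a) := by rw [pow_mul]; norm_num
    have : 3 * 4 ^ a + ∑ t ∈ F, 3 * 4 ^ t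
        = (∑ t ∈ F, 3 * 4 ^ t) + 2 ^ (2 * a) * 3 := by
      rw [pow_mul]; ring
    rw [this, sum_digits_split hlt, ih]
    have h3 : (Nat.digits 2 3).sum = 2 := by
      rw [Nat.digits_def' one_lt_two (by norm_num), Nat.digits_def' one_lt_two (by norm_num)]
      simp
    rw [h3, Finset.card_insert_of_notMem (fun h => absurd (ha a h) (lt_irrefl a))]
    ring

/-- In any sequence of positive integers, one can find a block (beyond any given
starting index) whose sum is divisible by a given positive `K`. -/
lemma exists_block (x : ℕ → ℕ) (s K : ℕ) (hK : 0 < K) :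
    ∃ F : Finset ℕ, F.Nonempty ∧ (∀ t ∈ F, s ≤ t) ∧ K ∣ ∑ t ∈ F, x t := by
  set P : ℕ → ℕ := fun r => ∑ t ∈ Finset.Ico s (s + r), x t with hP
  have hmaps : ∀ r ∈ Finset.range (K + 1), P r % K ∈ Finset.range K :=
    fun r _ => Finset.mem_range.mpr (Nat.mod_lt _ hK)
  obtain ⟨r1, hr1, r2, hr2, hne, heq⟩ :=
    Finset.exists_ne_map_eq_of_card_lt_of_maps_to
      (by simp : (Finset.range K).card < (Finset.range (K + 1)).card) hmaps
  wlog hlt : r1 < r2 generalizing r1 r2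
  · exact this r2 hr2 r1 hr1 hne.symm heq.symm (by omega)
  refine ⟨Finset.Ico (s + r1) (s + r2), ?_, ?_, ?_⟩
  · exact ⟨s + r1, Finset.mem_Ico.mpr ⟨le_refl _, by omega⟩⟩
  · intro t ht
    have := (Finset.mem_Ico.mp ht).1
    omega
  · have hsplit : P r1 + ∑ t ∈ Finset.Ico (s + r1) (s + r2), x t = P r2 := by
      rw [hP]
      exact Finset.sum_Ico_consecutive x (by omega) (by omega)
    have hmod : P r1 ≡ P r1 + ∑ t ∈ Finset.Ico (s + r1) (s + r2), x t [MOD K] := by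
      rw [hsplit]; exact heq
    have := (Nat.modEq_iff_dvd' (Nat.le_add_right _ _)).mp hmod
    simpa using this

lemma TM_lt_two (n : ℕ) : TM n < 2 := Nat.mod_lt _ (by norm_num)

/-- For every `n`, the set of `m` with `t_{n+m} = t_n` is an IP-set, the set of
`m` with `t_{n+m} ≠ t_n` is not, and so exactly one of the occurrence sets of
the letters `0` and `1` in the `n`-th shift of the Thue-Morse word is an
IP-set. -/
theorem tm_shift_letter_IP (n : ℕ) :
    IsIPSet {m : ℕ | TM (n + m) = TM n} ∧
    ¬ IsIPSet {m : ℕ | TM (n + m) ≠ TM n} ∧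
    Xor' (IsIPSet {m : ℕ | TM (n + m) = 0}) (IsIPSet {m : ℕ | TM (n + m) = 1}) := by
  have hn2 : n < 2 ^ (2 * (n + 1)) := by
    calc n < 2 ^ n := Nat.lt_two_pow_self
      _ ≤ 2 ^ (2 * (n + 1)) := Nat.pow_le_pow_right (by norm_num) (by omega)
  -- Part 1: the equality set is an IP-set
  have hIP : IsIPSet {m : ℕ | TM (n + m) = TM n} := by
    refine ⟨fun t => 2 ^ (2 * (n + 1)) * (3 * 4 ^ t), fun t => by positivity, ?_⟩
    intro F hF
    have hsum : ∑ t ∈ F, 2 ^ (2 * (n + 1)) * (3 * 4 ^ t)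
        = 2 ^ (2 * (n + 1)) * ∑ t ∈ F, 3 * 4 ^ t := by
      rw [Finset.mul_sum]
    simp only [Set.mem_setOf_eq, hsum]
    unfold TM
    rw [sum_digits_split hn2, digitsum_sum_three_pow]
    omega
  -- Part 2: the inequality set is not an IP-set
  have hnotIP : ¬ IsIPSet {m : ℕ | TM (n + m) ≠ TM n} := by
    rintro ⟨x, hx, hA⟩
    obtain ⟨F1, hF1ne, -, a, ha⟩ :=
      exists_block x 0 (2 ^ (n + 1)) (Nat.pow_pos (by norm_num))
    set m1 := ∑ t ∈ F1, x t with hm1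
    have hn1 : n < 2 ^ (n + 1) := by
      calc n < 2 ^ n := Nat.lt_two_pow_self
        _ ≤ 2 ^ (n + 1) := Nat.pow_le_pow_right (by norm_num) (Nat.le_succ n)
    obtain ⟨B, hB⟩ := F1.bddAbove
    obtain ⟨F2, hF2ne, hF2ge, c, hc⟩ :=
      exists_block x (B + 1) (2 ^ (n + m1 + 1)) (Nat.pow_pos (by norm_num))
    set m2 := ∑ t ∈ F2, x t with hm2
    have hnm1 : n + m1 < 2 ^ (n + m1 + 1) := by
      calc n + m1 < 2 ^ (n + m1) := Nat.lt_two_pow_self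
        _ ≤ 2 ^ (n + m1 + 1) := Nat.pow_le_pow_right (by norm_num) (Nat.le_succ _)
    have hdisj : Disjoint F1 F2 := by
      rw [Finset.disjoint_left]
      intro t ht1 ht2
      have h1 : t ≤ B := hB ht1
      have h2 : B + 1 ≤ t := hF2ge t ht2
      omega
    have h1 := hA F1 hF1ne
    have h2 := hA F2 hF2ne
    have h12 := hA (F1 ∪ F2) (hF1ne.mono Finset.subset_union_left)
    rw [Finset.sum_union hdisj] at h12
    simp only [Set.mem_setOf_eq, ← hm1, ← hm2] at h1 h2 h12
    unfold TM at h1 h2 h12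
    rw [ha, sum_digits_split hn1] at h1
    have hn1' : n < 2 ^ (n + m1 + 1) := lt_of_le_of_lt (Nat.le_add_right n m1) hnm1
    rw [hc, sum_digits_split hn1'] at h2
    rw [show n + (m1 + m2) = (n + m1) + m2 by ring] at h12
    rw [hc] at h12
    rw [sum_digits_split hnm1] at h12
    rw [ha] at h12
    rw [sum_digits_split hn1] at h12
    omega
  refine ⟨hIP, hnotIP, ?_⟩
  -- Part 3: Xor'
  have h01 : TM n = 0 ∨ TM n = 1 := by have := TM_lt_two n; omega
  rcases h01 with h | h
  · rw [h] at hIP hnotIP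
    have hset : {m : ℕ | TM (n + m) = 1} = {m : ℕ | TM (n + m) ≠ 0} :=
      Set.ext fun m => by
        have := TM_lt_two (n + m)
        simp only [Set.mem_setOf_eq]
        omega
    exact Or.inl ⟨hIP, by rw [hset]; exact hnotIP⟩
  · rw [h] at hIP hnotIP
    have hset : {m : ℕ | TM (n + m) = 0} = {m : ℕ | TM (n + m) ≠ 1} :=
      Set.ext fun m => by
        have := TM_lt_two (n + m)
        simp only [Set.mem_setOf_eq]
        omega
    exact Or.inr ⟨hIP, by rw [hset]; exact hnotIP⟩
end

section
/- The Thue-Morse word 𝕋 is a distal point of its shift orbit closure: if x : ℕ → {0,1} belongs to the closure (in the product topology on {0,1}^ℕ) of the set of shifts {(t_{n+m})_{m∈ℕ} : n ∈ ℕ} of 𝕋, and x is proximal to 𝕋 (i.e., for every L ∈ ℕ there exists n ∈ ℕ such that x(n+j) = t_{n+j} for all 0 ≤ j ≤ L−1), then x = 𝕋, that is, x(m) = t_m for all m. -/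
lemma TM_two_mul (n : ℕ) : TM (2 * n) = TM n := by
  rcases Nat.eq_zero_or_pos n with h | h
  · simp [h]
  · unfold TM
    rw [Nat.digits_def' (by norm_num : (1:ℕ) < 2) (by omega : 0 < 2 * n)]
    simp [Nat.mul_div_cancel_left _ (by norm_num : (0:ℕ) < 2)]

lemma TM_two_mul_add_one (n : ℕ) : TM (2 * n + 1) = (TM n + 1) % 2 := by
  unfold TM
  rw [Nat.digits_def' (by norm_num : (1:ℕ) < 2) (by omega : 0 < 2 * n + 1)]
  have h1 : (2 * n + 1) % 2 = 1 := by omega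
  have h2 : (2 * n + 1) / 2 = n := by omega
  rw [h1, h2]
  simp [Nat.add_mod, Nat.add_comm]

lemma TM_zero : TM 0 = 0 := by simp [TM]

/-- No two consecutive equal-pairs: we can't have `TM m = TM (m+1)` and
`TM (m+1) = TM (m+2)` simultaneously. -/
lemma TM_no_double_eq (m : ℕ) (h1 : TM m = TM (m + 1)) (h2 : TM (m + 1) = TM (m + 2)) :
    False := by
  rcases Nat.even_or_odd m with ⟨t, ht⟩ | ⟨t, ht⟩
  · subst ht
    have e1 : TM (t + t) = TM t := by rw [← two_mul, TM_two_mul]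
    have e2 : TM (t + t + 1) = (TM t + 1) % 2 := by rw [← two_mul, TM_two_mul_add_one]
    have := TM_lt_two t
    omega
  · subst ht
    have e1 : TM (2 * t + 1 + 1) = TM (t + 1) := by
      have : 2 * t + 1 + 1 = 2 * (t + 1) := by ring
      rw [this, TM_two_mul]
    have e2 : TM (2 * t + 1 + 2) = (TM (t + 1) + 1) % 2 := by
      have : 2 * t + 1 + 2 = 2 * (t + 1) + 1 := by ring
      rw [this, TM_two_mul_add_one]
    have := TM_lt_two (t + 1)
    omega

/-- If `TM` agrees on aligned windows of length 4 at positions `a` (even) and `b` (odd),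
contradiction. -/
lemma TM_sync_aux (a b : ℕ) (ha : a % 2 = 0) (hb : b % 2 = 1)
    (h : ∀ i < 4, TM (a + i) = TM (b + i)) : False := by
  obtain ⟨a₀, rfl⟩ : ∃ a₀, a = 2 * a₀ := ⟨a / 2, by omega⟩
  obtain ⟨b₀, rfl⟩ : ∃ b₀, b = 2 * b₀ + 1 := ⟨b / 2, by omega⟩
  have h0 := h 0 (by norm_num)
  have h1 := h 1 (by norm_num)
  have h2 := h 2 (by norm_num)
  have h3 := h 3 (by norm_num)
  have ea0 : TM (2 * a₀ + 0) = TM a₀ := by rw [Nat.add_zero, TM_two_mul]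
  have ea1 : TM (2 * a₀ + 1) = (TM a₀ + 1) % 2 := TM_two_mul_add_one a₀
  have ea2 : TM (2 * a₀ + 2) = TM (a₀ + 1) := by
    have : 2 * a₀ + 2 = 2 * (a₀ + 1) := by ring
    rw [this, TM_two_mul]
  have ea3 : TM (2 * a₀ + 3) = (TM (a₀ + 1) + 1) % 2 := by
    have : 2 * a₀ + 3 = 2 * (a₀ + 1) + 1 := by ring
    rw [this, TM_two_mul_add_one]
  have eb0 : TM (2 * b₀ + 1 + 0) = (TM b₀ + 1) % 2 := by
    rw [Nat.add_zero]; exact TM_two_mul_add_one b₀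
  have eb1 : TM (2 * b₀ + 1 + 1) = TM (b₀ + 1) := by
    have : 2 * b₀ + 1 + 1 = 2 * (b₀ + 1) := by ring
    rw [this, TM_two_mul]
  have eb2 : TM (2 * b₀ + 1 + 2) = (TM (b₀ + 1) + 1) % 2 := by
    have : 2 * b₀ + 1 + 2 = 2 * (b₀ + 1) + 1 := by ring
    rw [this, TM_two_mul_add_one]
  have eb3 : TM (2 * b₀ + 1 + 3) = TM (b₀ + 2) := by
    have : 2 * b₀ + 1 + 3 = 2 * (b₀ + 2) := by ring
    rw [this, TM_two_mul]
  have l0 := TM_lt_two a₀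
  have l1 := TM_lt_two (a₀ + 1)
  have l2 := TM_lt_two b₀
  have l3 := TM_lt_two (b₀ + 1)
  have l4 := TM_lt_two (b₀ + 2)
  -- derive TM b₀ = TM (b₀+1) and TM (b₀+1) = TM (b₀+2)
  have c1 : TM b₀ = TM (b₀ + 1) := by omega
  have c2 : TM (b₀ + 1) = TM (b₀ + 2) := by omega
  exact TM_no_double_eq b₀ c1 c2

/-- Length-4 agreement forces equal parity. -/
lemma TM_sync_parity (a b : ℕ) (h : ∀ i < 4, TM (a + i) = TM (b + i)) : a % 2 = b % 2 := by
  by_contra hne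
  rcases Nat.mod_two_eq_zero_or_one a with ha | ha <;>
    rcases Nat.mod_two_eq_zero_or_one b with hb | hb
  · omega
  · exact TM_sync_aux a b ha hb h
  · exact TM_sync_aux b a hb ha (fun i hi => (h i hi).symm)
  · omega


lemma mod_double {P a b : ℕ} (h : a % P = b % P) (c : ℕ) (hP : 0 < P) (hc : c < 2) :
    (2 * a + c) % (2 * P) = (2 * b + c) % (2 * P) := by
  have key : ∀ z : ℕ, (2 * z + c) % (2 * P) = 2 * (z % P) + c := by
    intro z
    have hz : z % P < P := Nat.mod_lt z hP
    have e : 2 * z + c = (2 * (z % P) + c) + 2 * P * (z / P) := by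
      have := Nat.div_add_mod z P
      nlinarith [Nat.div_add_mod z P]
    rw [e, Nat.add_mul_mod_self_left, Nat.mod_eq_of_lt (by omega)]
  rw [key a, key b, h]

/-- Agreement on a window of length `4 * 2^r` forces congruence mod `2^r`. -/
lemma TM_sync_pow (r : ℕ) : ∀ a b : ℕ,
    (∀ i < 4 * 2 ^ r, TM (a + i) = TM (b + i)) → a % 2 ^ r = b % 2 ^ r := by
  induction r with
  | zero => intro a b _; omega
  | succ r ih =>
    intro a b h
    have hpar : a % 2 = b % 2 := TM_sync_parity a b
      (fun i hi => h i (by have : (0:ℕ) < 2 ^ r := Nat.pow_pos (by norm_num); omega))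
    rcases Nat.mod_two_eq_zero_or_one a with ha | ha
    · obtain ⟨a₀, rfl⟩ : ∃ a₀, a = 2 * a₀ := ⟨a / 2, by omega⟩
      obtain ⟨b₀, rfl⟩ : ∃ b₀, b = 2 * b₀ := ⟨b / 2, by omega⟩
      have key : ∀ i < 4 * 2 ^ r, TM (a₀ + i) = TM (b₀ + i) := by
        intro i hi
        have h2 := h (2 * i) (by rw [pow_succ]; omega)
        have e1 : 2 * a₀ + 2 * i = 2 * (a₀ + i) := by ring
        have e2 : 2 * b₀ + 2 * i = 2 * (b₀ + i) := by ring
        rw [e1, e2, TM_two_mul, TM_two_mul] at h2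
        exact h2
      have hm := ih a₀ b₀ key
      have h2 := mod_double hm 0 (Nat.pow_pos (by norm_num)) (by norm_num)
      rw [pow_succ']
      simpa using h2
    · obtain ⟨a₀, rfl⟩ : ∃ a₀, a = 2 * a₀ + 1 := ⟨a / 2, by omega⟩
      obtain ⟨b₀, rfl⟩ : ∃ b₀, b = 2 * b₀ + 1 := ⟨b / 2, by omega⟩
      have key : ∀ i < 4 * 2 ^ r, TM (a₀ + 1 + i) = TM (b₀ + 1 + i) := by
        intro i hi
        have h2 := h (2 * i + 1) (by rw [pow_succ]; omega)
        have e1 : 2 * a₀ + 1 + (2 * i + 1) = 2 * (a₀ + 1 + i) := by ring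
        have e2 : 2 * b₀ + 1 + (2 * i + 1) = 2 * (b₀ + 1 + i) := by ring
        rw [e1, e2, TM_two_mul, TM_two_mul] at h2
        exact h2
      have hm : (a₀ + 1) % 2 ^ r = (b₀ + 1) % 2 ^ r := ih (a₀ + 1) (b₀ + 1) key
      have hm' : a₀ % 2 ^ r = b₀ % 2 ^ r :=
        Nat.ModEq.add_right_cancel' 1 hm
      have h2 := mod_double hm' 1 (Nat.pow_pos (by norm_num)) (by norm_num)
      rw [pow_succ']
      simpa using h2

/-- Carry-free addition: `TM (2^r * q + i) = (TM q + TM i) % 2` for `i < 2^r`. -/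
lemma TM_pow_add (r : ℕ) : ∀ q i : ℕ, i < 2 ^ r → TM (2 ^ r * q + i) = (TM q + TM i) % 2 := by
  induction r with
  | zero =>
    intro q i hi
    interval_cases i
    have := TM_lt_two q
    simp [TM_zero]
    omega
  | succ r ih =>
    intro q i hi
    rcases Nat.even_or_odd i with ⟨t, ht⟩ | ⟨t, ht⟩
    · have e : 2 ^ (r + 1) * q + i = 2 * (2 ^ r * q + t) := by
        subst ht; rw [pow_succ]; ring
      rw [e, TM_two_mul, ih q t (by rw [pow_succ] at hi; omega)]
      have : TM i = TM t := by subst ht; rw [← two_mul, TM_two_mul]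
      rw [this]
    · have e : 2 ^ (r + 1) * q + i = 2 * (2 ^ r * q + t) + 1 := by
        subst ht; rw [pow_succ]; ring
      rw [e, TM_two_mul_add_one, ih q t (by rw [pow_succ] at hi; omega)]
      have : TM i = (TM t + 1) % 2 := by subst ht; rw [TM_two_mul_add_one]
      rw [this]
      omega

/-- The Thue-Morse word is a distal point of its shift orbit closure: any point
of the orbit closure which is proximal to `𝕋` equals `𝕋`. -/
theorem tm_distal (x : ℕ → ℕ)
    (hx : x ∈ closure {y : ℕ → ℕ | ∃ n : ℕ, y = fun m => TM (n + m)})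
    (hprox : ∀ L : ℕ, ∃ n : ℕ, ∀ j < L, x (n + j) = TM (n + j)) :
    ∀ m : ℕ, x m = TM m := by
  -- finite approximation from the closure hypothesis
  have approx : ∀ M : ℕ, ∃ k : ℕ, ∀ i < M, x i = TM (k + i) := by
    intro M
    have hU : IsOpen (Set.pi (↑(Finset.range M) : Set ℕ) (fun i => ({x i} : Set ℕ))) :=
      isOpen_set_pi (Finset.range M).finite_toSet (fun i _ => isOpen_discrete _)
    have hxU : x ∈ Set.pi (↑(Finset.range M) : Set ℕ) (fun i => ({x i} : Set ℕ)) := by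
      intro i _; rfl
    obtain ⟨y, hy1, hy2⟩ := (mem_closure_iff.mp hx) _ hU hxU
    obtain ⟨k, rfl⟩ := hy2
    refine ⟨k, fun i hi => ?_⟩
    have := hy1 i (by simpa using hi)
    exact this.symm
  -- master formula : x m = (x 0 + TM m) % 2
  have master : ∀ m : ℕ, x m = (x 0 + TM m) % 2 := by
    intro m
    obtain ⟨r, hr⟩ : ∃ r, m < 2 ^ r := ⟨m, Nat.lt_two_pow_self⟩
    have hrpos : 0 < 2 ^ r := Nat.pow_pos (by norm_num)
    obtain ⟨n, hn⟩ := hprox (4 * 2 ^ r)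
    obtain ⟨k, hk⟩ := approx (n + 4 * 2 ^ r)
    have hagree : ∀ j < 4 * 2 ^ r, TM (k + n + j) = TM (n + j) := by
      intro j hj
      have h1 := hk (n + j) (by omega)
      have h2 := hn j hj
      rw [show k + n + j = k + (n + j) by ring]
      omega
    have hmod : (k + n) % 2 ^ r = n % 2 ^ r := TM_sync_pow r (k + n) n hagree
    have hk0 : k % 2 ^ r = 0 % 2 ^ r :=
      Nat.ModEq.add_right_cancel' n (show (k + n) % 2 ^ r = (0 + n) % 2 ^ r by
        simpa using hmod)
    obtain ⟨q, hq⟩ : 2 ^ r ∣ k := Nat.dvd_of_mod_eq_zero (by simpa using hk0)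
    have e0 : x 0 = TM q := by
      have h := hk 0 (by omega)
      rw [hq] at h
      rw [show 2 ^ r * q + 0 = 2 ^ r * q + 0 from rfl] at h
      rw [TM_pow_add r q 0 hrpos, TM_zero] at h
      have := TM_lt_two q
      omega
    have em : x m = TM (2 ^ r * q + m) := by
      have h := hk m (by omega)
      rwa [hq] at h
    rw [TM_pow_add r q m hr] at em
    rw [em, e0]
  have hx0 : x 0 < 2 := by
    have h := master 0
    rw [TM_zero] at h
    omega
  rcases (by omega : x 0 = 0 ∨ x 0 = 1) with h0 | h0
  · intro m
    have h := master m
    have := TM_lt_two m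
    omega
  · exfalso
    obtain ⟨n, hn⟩ := hprox 1
    have h1 := hn 0 (by norm_num)
    have h2 := master (n + 0)
    have := TM_lt_two (n + 0)
    omega
end

section
/- Let N be a positive integer and define x : ℕ → {0,1} by x(m) = t_{N−m} for 0 ≤ m ≤ N and x(m) = t_{m−N−1} for m > N (so x is the word t_N t_{N−1} … t_0 followed by 𝕋). Then for each n with 0 ≤ n ≤ N, both sets {m ∈ ℕ : x(m+n) = 0} and {m ∈ ℕ : x(m+n) = 1} are IP-sets; and for each n > N, exactly one of the two sets {m ∈ ℕ : x(m+n) = 0} and {m ∈ ℕ : x(m+n) = 1} is an IP-set. -/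
lemma TM_bit (n r : ℕ) (hr : r < 2) : TM (2*n + r) = (TM n + r) % 2 := by
  rcases Nat.eq_zero_or_pos n with h | h
  · subst h; interval_cases r <;> norm_num [TM]
  · have hpos : 2*n + r ≠ 0 := by omega
    have hd := Nat.digits_def' (by norm_num : 1 < 2) (by omega : 0 < 2*n + r)
    have h1 : (2*n + r) % 2 = r := by omega
    have h2 : (2*n + r) / 2 = n := by omega
    rw [TM, hd, h1, h2, List.sum_cons]
    have : (Nat.digits 2 n).sum % 2 = TM n := rfl
    omega

lemma TM_add_pow : ∀ (K a b : ℕ), a < 2^K → TM (a + 2^K * b) = (TM a + TM b) % 2 := by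
  intro K
  induction K with
  | zero =>
    intro a b ha
    have : a = 0 := by omega
    subst this
    simp [TM, Nat.mod_mod]
  | succ K ih =>
    intro a b ha
    have hdm := Nat.div_add_mod a 2
    have hm2 : a % 2 < 2 := Nat.mod_lt _ (by norm_num)
    have hpow : 2^(K+1) = 2 * 2^K := by ring
    have heq : a + 2^(K+1) * b = 2*(a/2 + 2^K * b) + a % 2 := by
      rw [hpow]; ring_nf; omega
    have hdiv : a / 2 < 2^K := by omega
    rw [heq, TM_bit _ _ hm2, ih _ b hdiv]
    have ha' : TM a = (TM (a/2) + a % 2) % 2 := by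
      conv_lhs => rw [← hdm]
      rw [TM_bit _ _ hm2]
    have := TM_lt_two (a/2)
    have := TM_lt_two b
    omega

lemma TM_pow_mul (K b : ℕ) : TM (2^K * b) = TM b := by
  have h := TM_add_pow K 0 b (Nat.pow_pos (n := K) (by norm_num))
  simpa [TM, TM_lt_two, Nat.mod_mod_of_dvd] using h

lemma main_blocks (L0 : ℕ) (w : ℕ → ℕ) (hw0 : ∀ t, TM (w t) = 0) (hw6 : ∀ t, w t ≤ 6) :
    ∀ (F : Finset ℕ) (a : ℕ), (∀ t ∈ F, t < a) → ∀ (s b : ℕ), s ≤ a → (∀ t ∈ F, s ≤ t) →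
      b < 2^(L0+4*s) →
      TM (b + ∑ t ∈ F, 2^(L0+4*t) * w t) = TM b ∧
      b + ∑ t ∈ F, 2^(L0+4*t) * w t < 2^(L0+4*a) := by
  intro F
  induction F using Finset.induction_on_max with
  | empty =>
    intro a ha s b hsa hs hb
    refine ⟨by simp, ?_⟩
    simpa using lt_of_lt_of_le hb (Nat.pow_le_pow_right (by norm_num) (by omega : L0+4*s ≤ L0+4*a))
  | insert a' s' hmax ih =>
    intro a ha s b hsa hs hb
    have ha' : a' < a := ha a' (Finset.mem_insert_self _ _)
    have hsa' : s ≤ a' := hs a' (Finset.mem_insert_self _ _)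
    obtain ⟨h1, h2⟩ := ih a' (fun t ht => hmax t ht) s b hsa'
      (fun t ht => hs t (Finset.mem_insert_of_mem ht)) hb
    have hnotmem : a' ∉ s' := fun h => lt_irrefl a' (hmax a' h)
    rw [Finset.sum_insert hnotmem]
    have hre : b + (2^(L0+4*a') * w a' + ∑ t ∈ s', 2^(L0+4*t) * w t)
        = (b + ∑ t ∈ s', 2^(L0+4*t) * w t) + 2^(L0+4*a') * w a' := by ring
    rw [hre, TM_add_pow _ _ _ h2, h1, hw0 a']
    constructor
    · have := TM_lt_two b; omega
    · have hb6 : 2^(L0+4*a') * w a' ≤ 2^(L0+4*a') * 6 :=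
        Nat.mul_le_mul_left _ (hw6 a')
      have hstep : 2^(L0+4*a') * 16 ≤ 2^(L0+4*a) := by
        calc 2^(L0+4*a') * 16 = 2^(L0+4*a'+4) := by rw [pow_add, pow_add, pow_add]; ring
        _ ≤ 2^(L0+4*a) := Nat.pow_le_pow_right (by norm_num) (by omega)
      omega

lemma pigeonhole_dvd (x : ℕ → ℕ) (K s : ℕ) :
    ∃ F : Finset ℕ, F.Nonempty ∧ (∀ t ∈ F, s ≤ t) ∧ 2^K ∣ ∑ t ∈ F, x t := by
  set m := 2^K with hm
  have hm0 : 0 < m := Nat.pow_pos (by norm_num)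
  set P : ℕ → ℕ := fun j => ∑ t ∈ Finset.Ico s (s+j), x t with hP
  have hmaps : ∀ j ∈ Finset.range (m+1), P j % m ∈ Finset.range m := by
    intro j _; exact Finset.mem_range.2 (Nat.mod_lt _ hm0)
  have hcard : (Finset.range m).card < (Finset.range (m+1)).card := by simp
  obtain ⟨i, hi, j, hj, hij, heq⟩ :=
    Finset.exists_ne_map_eq_of_card_lt_of_maps_to hcard hmaps
  -- wlog i < j
  rcases hij.lt_or_gt with hlt | hlt
  all_goals {
    first
    | (refine ⟨Finset.Ico (s+i) (s+j), ?_, ?_, ?_⟩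
       · exact ⟨s+i, Finset.mem_Ico.2 ⟨le_refl _, by omega⟩⟩
       · intro t ht; have := (Finset.mem_Ico.1 ht).1; omega
       · have hsum := Finset.sum_Ico_consecutive x
           (by omega : s ≤ s+i) (by omega : s+i ≤ s+j)
         have hmod : P i ≡ P j [MOD m] := heq
         have hle : P i ≤ P j := by
           rw [hP]; simp only []
           rw [← hsum]; exact Nat.le_add_right _ _
         have := (Nat.modEq_iff_dvd' hle).1 hmod
         have hPP : P j - P i = ∑ t ∈ Finset.Ico (s+i) (s+j), x t := by
           rw [hP]; simp only []; omega
         rwa [hPP] at this)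
    | (refine ⟨Finset.Ico (s+j) (s+i), ?_, ?_, ?_⟩
       · exact ⟨s+j, Finset.mem_Ico.2 ⟨le_refl _, by omega⟩⟩
       · intro t ht; have := (Finset.mem_Ico.1 ht).1; omega
       · have hsum := Finset.sum_Ico_consecutive x
           (by omega : s ≤ s+j) (by omega : s+j ≤ s+i)
         have hmod : P j ≡ P i [MOD m] := heq.symm
         have hle : P j ≤ P i := by
           rw [hP]; simp only []
           rw [← hsum]; exact Nat.le_add_right _ _
         have := (Nat.modEq_iff_dvd' hle).1 hmod
         have hPP : P i - P j = ∑ t ∈ Finset.Ico (s+j) (s+i), x t := by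
           rw [hP]; simp only []; omega
         rwa [hPP] at this)
  }

-- Part 1: for any d ≥ 1 and c < 2, there is an IP family all of whose sums m
-- satisfy m ≥ d and TM (m - d) = c.
lemma part1_aux (d c : ℕ) (hd : 0 < d) (hc : c < 2) :
    ∃ z : ℕ → ℕ, (∀ t, 0 < z t) ∧
      ∀ F : Finset ℕ, F.Nonempty →
        d < ∑ t ∈ F, z t ∧ TM ((∑ t ∈ F, z t) - d) = c := by
  set L0 := d with hL0
  have hdlt : d < 2^L0 := Nat.lt_two_pow_self (n := d)
  set w : ℕ → ℕ := fun t => if (c + TM (2^(L0+4*t) - d)) % 2 = 0 then 6 else 3 with hw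
  have hw0 : ∀ t, TM (w t) = 0 := by
    intro t; rw [hw]; dsimp only
    split <;> norm_num [TM]
  have hw6 : ∀ t, w t ≤ 6 := by intro t; rw [hw]; dsimp only; split <;> norm_num
  have hw3 : ∀ t, 3 ≤ w t := by intro t; rw [hw]; dsimp only; split <;> norm_num
  refine ⟨fun t => 2^(L0+4*t) * w t, ?_, ?_⟩
  · intro t
    exact Nat.mul_pos (Nat.pow_pos (by norm_num)) (by have := hw3 t; omega)
  · intro F hF
    set t1 := F.min' hF with ht1
    have ht1F : t1 ∈ F := F.min'_mem hF
    set L := L0 + 4*t1 with hL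
    have hdL : d < 2^L := lt_of_lt_of_le hdlt (Nat.pow_le_pow_right (by norm_num) (by omega))
    have hz1 : 2^L * w t1 ≥ 2^L * 3 := Nat.mul_le_mul_left _ (hw3 t1)
    have hsplit : 2^L * w t1 + ∑ t ∈ F.erase t1, 2^(L0+4*t) * w t
        = ∑ t ∈ F, 2^(L0+4*t) * w t := by
      rw [hL]; exact Finset.add_sum_erase F (fun t => 2^(L0+4*t) * w t) ht1F
    set S := ∑ t ∈ F.erase t1, 2^(L0+4*t) * w t with hS
    -- b := z t1 - d
    set b := 2^L * w t1 - d with hb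
    have hble : b < 2^(L0+4*(t1+1)) := by
      have h6 : 2^L * w t1 ≤ 2^L * 6 := Nat.mul_le_mul_left _ (hw6 t1)
      have : 2^L * 16 ≤ 2^(L0+4*(t1+1)) := by
        calc 2^L * 16 = 2^(L+4) := by ring
        _ ≤ _ := Nat.pow_le_pow_right (by norm_num) (by omega)
      omega
    have herase : ∀ t ∈ F.erase t1, t1 + 1 ≤ t := by
      intro t ht
      have h1 := Finset.ne_of_mem_erase ht
      have h2 := F.min'_le t (Finset.mem_of_mem_erase ht)
      omega
    have hlta : ∀ t ∈ F.erase t1, t < (F.sup id) + 1 := by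
      intro t ht
      have := Finset.le_sup (f := id) (Finset.mem_of_mem_erase ht)
      simpa using Nat.lt_succ_of_le this
    have hsale : t1 + 1 ≤ F.sup id + 1 := by
      have := Finset.le_sup (f := id) ht1F; simpa using Nat.succ_le_succ this
    obtain ⟨hTM, _⟩ := main_blocks L0 w hw0 hw6 (F.erase t1) (F.sup id + 1) hlta
      (t1+1) b hsale herase hble
    -- compute TM b = c
    have hbc : TM b = c := by
      have hw1 : 1 ≤ w t1 := by have := hw3 t1; omega
      have hmul : 2^L * (w t1 - 1) = 2^L * w t1 - 2^L := by
        rw [Nat.mul_sub, mul_one]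
      have hdecomp : b = (2^L - d) + 2^L * (w t1 - 1) := by omega
      have hlow : 2^L - d < 2^L := by omega
      rw [hdecomp, TM_add_pow _ _ _ hlow]
      set δ := TM (2^L - d) with hδ
      have hδ2 : δ < 2 := TM_lt_two _
      by_cases hcase : (c + δ) % 2 = 0
      · have : w t1 = 6 := by rw [hw]; dsimp only; rw [hL] at hδ; rw [if_pos]; exact hcase
        rw [this]
        have h5 : TM 5 = 0 := by norm_num [TM]
        norm_num [h5]; omega
      · have : w t1 = 3 := by rw [hw]; dsimp only; rw [hL] at hδ; rw [if_neg]; exact hcase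
        rw [this]
        have h2 : TM 2 = 1 := by norm_num [TM]
        norm_num [h2]; omega
    constructor
    · show d < ∑ t ∈ F, 2^(L0+4*t) * w t
      omega
    · show TM ((∑ t ∈ F, 2^(L0+4*t) * w t) - d) = c
      have hmd : (∑ t ∈ F, 2^(L0+4*t) * w t) - d = b + S := by omega
      rw [hmd, hTM, hbc]

lemma part2_pos (k : ℕ) :
    ∃ z : ℕ → ℕ, (∀ t, 0 < z t) ∧
      ∀ F : Finset ℕ, F.Nonempty → TM ((∑ t ∈ F, z t) + k) = TM k := by
  set L0 := k + 1 with hL0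
  have hk : k < 2^L0 := lt_of_lt_of_le (Nat.lt_two_pow_self (n := k))
    (Nat.pow_le_pow_right (by norm_num) (by omega))
  refine ⟨fun t => 2^(L0+4*t) * 3, ?_, ?_⟩
  · intro t; positivity
  · intro F hF
    have h3 : TM 3 = 0 := by norm_num [TM]
    have hlt : ∀ t ∈ F, t < F.sup id + 1 := by
      intro t ht
      have := Finset.le_sup (f := id) ht
      simpa using Nat.lt_succ_of_le this
    obtain ⟨hTM, _⟩ := main_blocks L0 (fun _ => 3) (fun _ => h3) (fun _ => by norm_num)
      F (F.sup id + 1) hlt 0 k (by omega) (fun t _ => Nat.zero_le t)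
      (by simpa using hk)
    show TM ((∑ t ∈ F, 2^(L0+4*t) * 3) + k) = TM k
    rw [add_comm]
    exact hTM

lemma part2_neg (k c : ℕ) (hne : c ≠ TM k) (x' : ℕ → ℕ)
    (h : ∀ F : Finset ℕ, F.Nonempty → TM ((∑ t ∈ F, x' t) + k) = c) : False := by
  obtain ⟨F1, hne1, -, b1, hy1⟩ := pigeonhole_dvd x' (k+1) 0
  set y1 := ∑ t ∈ F1, x' t with hY1
  obtain ⟨F2, hne2, hge2, b2, hy2⟩ := pigeonhole_dvd x' (k + y1 + 1) (F1.sup id + 1)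
  set y2 := ∑ t ∈ F2, x' t with hY2
  have hdisj : Disjoint F1 F2 := by
    rw [Finset.disjoint_left]
    intro t h1 h2
    have ha := Finset.le_sup (f := id) h1
    have hb := hge2 t h2
    simp only [id] at ha
    omega
  have hk1 : k < 2^(k+1) :=
    lt_of_lt_of_le (Nat.lt_two_pow_self (n := k)) (Nat.pow_le_pow_right (by norm_num) (by omega))
  have hk2 : k + y1 < 2^(k+y1+1) :=
    lt_of_lt_of_le (Nat.lt_two_pow_self (n := k+y1)) (Nat.pow_le_pow_right (by norm_num) (by omega))
  have hk2' : k < 2^(k+y1+1) := by omega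
  -- equation from F1
  have e1 : TM (k + y1) = c := by rw [add_comm]; exact h F1 hne1
  -- equation from F1 ∪ F2
  have e3 : TM ((k + y1) + 2^(k+y1+1) * b2) = c := by
    have hsum : ∑ t ∈ F1 ∪ F2, x' t = y1 + y2 := Finset.sum_union hdisj
    have := h (F1 ∪ F2) (Finset.Nonempty.inl hne1)
    rw [hsum] at this
    rw [← hy2]
    calc TM (k + y1 + y2) = TM (y1 + y2 + k) := by ring_nf
    _ = c := this
  rw [TM_add_pow _ _ _ hk2, e1] at e3
  have hb2 : TM b2 = 0 := by
    have := TM_lt_two b2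
    have := TM_lt_two k
    have hc : c < 2 := by
      have := h F1 hne1
      rw [← this]; exact TM_lt_two _
    omega
  -- equation from F2
  have e2 : TM (k + 2^(k+y1+1) * b2) = c := by
    rw [← hy2, add_comm]; exact h F2 hne2
  rw [TM_add_pow _ _ _ hk2', hb2] at e2
  have := TM_lt_two k
  omega

/-- Let `x = t_N t_{N-1} … t_0 𝕋`. For `0 ≤ n ≤ N` both letter occurrence sets
of the `n`-th shift of `x` are IP-sets, while for `n > N` exactly one of them
is. -/
theorem tm_reversed_prefix_shifts_IP (N : ℕ) (hN : 0 < N)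
    (x : ℕ → ℕ) (hx : ∀ m : ℕ, x m = if m ≤ N then TM (N - m) else TM (m - N - 1)) :
    (∀ n ≤ N, IsIPSet {m : ℕ | x (m + n) = 0} ∧ IsIPSet {m : ℕ | x (m + n) = 1}) ∧
    (∀ n > N, Xor' (IsIPSet {m : ℕ | x (m + n) = 0})
      (IsIPSet {m : ℕ | x (m + n) = 1})) := by
  have key1 : ∀ n ≤ N, ∀ c < 2, IsIPSet {m : ℕ | x (m + n) = c} := by
    intro n hn c hc
    obtain ⟨z, hpos, hprop⟩ := part1_aux (N - n + 1) c (by omega) hc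
    refine ⟨z, hpos, ?_⟩
    intro F hF
    obtain ⟨hgt, hTM⟩ := hprop F hF
    show x ((∑ t ∈ F, z t) + n) = c
    rw [hx]
    rw [if_neg (by omega)]
    have heq : (∑ t ∈ F, z t) + n - N - 1 = (∑ t ∈ F, z t) - (N - n + 1) := by omega
    rw [heq]
    exact hTM
  have key2pos : ∀ n > N, IsIPSet {m : ℕ | x (m + n) = TM (n - N - 1)} := by
    intro n hn
    obtain ⟨z, hpos, hprop⟩ := part2_pos (n - N - 1)
    refine ⟨z, hpos, ?_⟩
    intro F hF
    show x ((∑ t ∈ F, z t) + n) = TM (n - N - 1)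
    rw [hx, if_neg (by omega)]
    have heq : (∑ t ∈ F, z t) + n - N - 1 = (∑ t ∈ F, z t) + (n - N - 1) := by omega
    rw [heq]
    exact hprop F hF
  have key2neg : ∀ n > N, ∀ c, c ≠ TM (n - N - 1) → ¬ IsIPSet {m : ℕ | x (m + n) = c} := by
    intro n hn c hne hIP
    obtain ⟨x', hpos', hsum'⟩ := hIP
    refine part2_neg (n - N - 1) c hne x' ?_
    intro F hF
    have hmem := hsum' F hF
    have hxv : x ((∑ t ∈ F, x' t) + n) = c := hmem
    rw [hx, if_neg (by omega)] at hxv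
    have heq : (∑ t ∈ F, x' t) + n - N - 1 = (∑ t ∈ F, x' t) + (n - N - 1) := by omega
    rw [heq] at hxv
    exact hxv
  constructor
  · intro n hn
    exact ⟨key1 n hn 0 (by norm_num), key1 n hn 1 (by norm_num)⟩
  · intro n hn
    have htm2 := TM_lt_two (n - N - 1)
    rcases (by omega : TM (n - N - 1) = 0 ∨ TM (n - N - 1) = 1) with h0 | h1
    · left
      constructor
      · have := key2pos n hn; rwa [h0] at this
      · exact key2neg n hn 1 (by omega)
    · right
      constructor
      · have := key2pos n hn; rwa [h1] at this
      · exact key2neg n hn 0 (by omega)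
end
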